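/- With J symmetric positive definite and the additive Schwarz operator P = Σ_{i=1}^m R_i^T (R_i J R_i^T)^{-1} R_i as above, every eigenvalue λ of PJ satisfies 0 < λ ≤ m·ν, where ν is the maximum number of subdomains containing any given index (maximal overlap); in particular λ_max(PJ) ≤ m. -/

import Mathlib

/-! Writing `Π = Bᵀ (B J Bᵀ)⁻¹ B J`, each term of `P J` is a `J`-orthogonal projection, so
`0 ≤ ‖x - Π x‖²_J = ‖x‖²_J - ⟨x, Π x⟩_J`; summing over the subdomains bounds the Rayleigh
quotient `⟨x, P J x⟩_J / ‖x‖²_J` of `P J` by the number of subdomains. It is positive because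
the subdomains cover every index, so some restriction of `J x ≠ 0` is nonzero. -/

open Matrix

/-- The row-selection ("restriction") matrix whose rows are the rows `ι a` of the
identity matrix. -/
def selMatrix {k N : ℕ} (ι : Fin k → Fin N) : Matrix (Fin k) (Fin N) ℝ :=
  Matrix.of fun a b => if ι a = b then 1 else 0

theorem Matrix.exists_mulVec_eq_smul_of_mem_spectrum {K n : Type*} [Field K] [Fintype n]
    [DecidableEq n] {A : Matrix n n K} {μ : K} (h : μ ∈ spectrum K A) :
    ∃ x ≠ 0, A *ᵥ x = μ • x := by
  rw [← spectrum_toLin', ← Module.End.hasEigenvalue_iff_mem_spectrum] at h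
  obtain ⟨x, hx, hx0⟩ := h.exists_hasEigenvector
  exact ⟨x, hx0, by simpa using Module.End.mem_eigenspace_iff.mp hx⟩

section AdditiveSchwarz

variable {n I : Type*} [Fintype n] [Fintype I] {κ : I → Type*} [∀ i, Fintype (κ i)]
  [∀ i, DecidableEq (κ i)]

noncomputable def additiveSchwarz (J : Matrix n n ℝ) (B : ∀ i, Matrix (κ i) n ℝ) :
    Matrix n n ℝ :=
  ∑ i, (B i)ᵀ * (B i * J * (B i)ᵀ)⁻¹ * B i

theorem dotProduct_additiveSchwarz_mulVec (J : Matrix n n ℝ) (B : ∀ i, Matrix (κ i) n ℝ)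
    (y : n → ℝ) :
    y ⬝ᵥ (additiveSchwarz J B *ᵥ y) =
      ∑ i, (B i *ᵥ y) ⬝ᵥ ((B i * J * (B i)ᵀ)⁻¹ *ᵥ (B i *ᵥ y)) := by
  rw [additiveSchwarz, sum_mulVec, dotProduct_sum]
  refine Finset.sum_congr rfl fun i _ => ?_
  rw [← mulVec_mulVec, ← mulVec_mulVec, dotProduct_transpose_mulVec, dotProduct_comm]

theorem dotProduct_inv_mulVec_le {l : Type*} [Fintype l] [DecidableEq l] {J : Matrix n n ℝ}
    (hJ : J.PosSemidef) (B : Matrix l n ℝ) (hG : IsUnit (B * J * Bᵀ).det) (x : n → ℝ) :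
    (B *ᵥ (J *ᵥ x)) ⬝ᵥ ((B * J * Bᵀ)⁻¹ *ᵥ (B *ᵥ (J *ᵥ x))) ≤ x ⬝ᵥ (J *ᵥ x) := by
  set w := B *ᵥ (J *ᵥ x)
  set g := (B * J * Bᵀ)⁻¹ *ᵥ w
  set u := Bᵀ *ᵥ g
  have hJsymm : Jᵀ = J := by simpa using hJ.isHermitian.eq
  have hGg : (B * J * Bᵀ) *ᵥ g = w := by
    rw [mulVec_mulVec, mul_nonsing_inv _ hG, one_mulVec]
  have huu : u ⬝ᵥ (J *ᵥ u) = w ⬝ᵥ g := by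
    rw [dotProduct_comm, dotProduct_transpose_mulVec, mulVec_mulVec, mulVec_mulVec, hGg,
      dotProduct_comm]
  have hux : u ⬝ᵥ (J *ᵥ x) = w ⬝ᵥ g := by
    rw [dotProduct_comm, dotProduct_transpose_mulVec, dotProduct_comm]
  have hxu : x ⬝ᵥ (J *ᵥ u) = u ⬝ᵥ (J *ᵥ x) := by
    rw [dotProduct_mulVec, ← mulVec_transpose, hJsymm, dotProduct_comm]
  have hnonneg : 0 ≤ (x - u) ⬝ᵥ (J *ᵥ (x - u)) := by
    simpa using hJ.dotProduct_mulVec_nonneg (x - u)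
  simp only [mulVec_sub, dotProduct_sub, sub_dotProduct] at hnonneg
  linarith

theorem eigenvalue_mul_dotProduct_mulVec {P J : Matrix n n ℝ} {lam : ℝ} {x : n → ℝ}
    (hx : (P * J) *ᵥ x = lam • x) :
    (J *ᵥ x) ⬝ᵥ (P *ᵥ (J *ᵥ x)) = lam * (x ⬝ᵥ (J *ᵥ x)) := by
  rw [mulVec_mulVec, hx, dotProduct_smul, smul_eq_mul, dotProduct_comm]

variable [DecidableEq n] {J : Matrix n n ℝ} {B : ∀ i, Matrix (κ i) n ℝ} {lam : ℝ}

theorem le_card_of_mem_spectrum_additiveSchwarz_mul (hJ : J.PosDef)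
    (hG : ∀ i, IsUnit (B i * J * (B i)ᵀ).det)
    (hlam : lam ∈ spectrum ℝ (additiveSchwarz J B * J)) : lam ≤ Fintype.card I := by
  obtain ⟨x, hx0, hx⟩ := exists_mulVec_eq_smul_of_mem_spectrum hlam
  have hxJx : 0 < x ⬝ᵥ (J *ᵥ x) := by simpa using hJ.dotProduct_mulVec_pos hx0
  have : lam * (x ⬝ᵥ (J *ᵥ x)) ≤ Fintype.card I * (x ⬝ᵥ (J *ᵥ x)) :=
    calc lam * (x ⬝ᵥ (J *ᵥ x))
        = ∑ i, (B i *ᵥ (J *ᵥ x)) ⬝ᵥ ((B i * J * (B i)ᵀ)⁻¹ *ᵥ (B i *ᵥ (J *ᵥ x))) := by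
          rw [← eigenvalue_mul_dotProduct_mulVec hx, dotProduct_additiveSchwarz_mulVec]
      _ ≤ ∑ _i : I, x ⬝ᵥ (J *ᵥ x) :=
          Finset.sum_le_sum fun i _ => dotProduct_inv_mulVec_le hJ.posSemidef (B i) (hG i) x
      _ = Fintype.card I * (x ⬝ᵥ (J *ᵥ x)) := by simp
  exact le_of_mul_le_mul_right this hxJx

theorem pos_of_mem_spectrum_additiveSchwarz_mul (hJ : J.PosDef)
    (hG : ∀ i, (B i * J * (B i)ᵀ).PosDef) (hB : ∀ y ≠ 0, ∃ i, B i *ᵥ y ≠ 0)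
    (hlam : lam ∈ spectrum ℝ (additiveSchwarz J B * J)) : 0 < lam := by
  obtain ⟨x, hx0, hx⟩ := exists_mulVec_eq_smul_of_mem_spectrum hlam
  have hxJx : 0 < x ⬝ᵥ (J *ᵥ x) := by simpa using hJ.dotProduct_mulVec_pos hx0
  have hJx : J *ᵥ x ≠ 0 := fun h => by simp [h] at hxJx
  obtain ⟨i, hi⟩ := hB _ hJx
  have hsum : 0 < lam * (x ⬝ᵥ (J *ᵥ x)) := by
    rw [← eigenvalue_mul_dotProduct_mulVec hx, dotProduct_additiveSchwarz_mulVec]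
    refine Finset.sum_pos' (fun j _ => ?_) ⟨i, Finset.mem_univ i, ?_⟩
    · simpa using (hG j).inv.posSemidef.dotProduct_mulVec_nonneg (B j *ᵥ (J *ᵥ x))
    · simpa using (hG i).inv.dotProduct_mulVec_pos hi
  exact pos_of_mul_pos_left hsum hxJx.le

end AdditiveSchwarz

section Selection

variable {k N : ℕ}

@[simp]
theorem selMatrix_mulVec (ι : Fin k → Fin N) (z : Fin N → ℝ) (a : Fin k) :
    (selMatrix ι *ᵥ z) a = z (ι a) := by
  simp [selMatrix, mulVec, dotProduct]

theorem selMatrix_mul_transpose {ι : Fin k → Fin N} (hι : Function.Injective ι) :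
    selMatrix ι * (selMatrix ι)ᵀ = 1 := by
  ext a b
  simp [selMatrix, mul_apply, one_apply, hι.eq_iff]

theorem Matrix.PosDef.selMatrix_mul_mul_transpose {J : Matrix (Fin N) (Fin N) ℝ}
    (hJ : J.PosDef) {ι : Fin k → Fin N} (hι : Function.Injective ι) :
    (selMatrix ι * J * (selMatrix ι)ᵀ).PosDef := by
  rw [← conjTranspose_eq_transpose_of_trivial]
  refine hJ.mul_mul_conjTranspose_same
    (Function.LeftInverse.injective (g := (· ᵥ* (selMatrix ι)ᵀ)) fun y => ?_)
  simp [vecMul_vecMul, selMatrix_mul_transpose hι]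

theorem exists_selMatrix_mulVec_ne_zero {I : Type*} {n : I → ℕ} {ι : ∀ i, Fin (n i) → Fin N}
    (hcover : ∀ j, ∃ i a, ι i a = j) {y : Fin N → ℝ} (hy : y ≠ 0) :
    ∃ i, selMatrix (ι i) *ᵥ y ≠ 0 := by
  obtain ⟨j, hj⟩ := Function.ne_iff.mp hy
  obtain ⟨i, a, rfl⟩ := hcover j
  exact ⟨i, fun h => hj (by simpa using congrFun h a)⟩

end Selection

/-- with `J` SPD and `P = ∑ᵢ Rᵢᵀ (Rᵢ J Rᵢᵀ)⁻¹ Rᵢ`, every eigenvalue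
`λ` of `P J` satisfies `0 < λ ≤ m ν` where `ν` bounds the maximal overlap (number of
subdomains containing any given index); in particular `λ ≤ m`. -/
theorem additiveSchwarz_spectrum_bounds
    (N m : ℕ) (J : Matrix (Fin N) (Fin N) ℝ) (hJ : J.PosDef)
    (n : Fin m → ℕ) (ι : ∀ i, Fin (n i) → Fin N)
    (hinj : ∀ i, Function.Injective (ι i))
    (hcover : ∀ j : Fin N, ∃ i a, ι i a = j)
    (ν : ℕ)
    (hν : ∀ j : Fin N, (Finset.univ.filter fun i => ∃ a, ι i a = j).card ≤ ν) :
    ∀ lam ∈ spectrum ℝ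
        ((∑ i, (selMatrix (ι i))ᵀ * (selMatrix (ι i) * J * (selMatrix (ι i))ᵀ)⁻¹ *
          selMatrix (ι i)) * J),
      0 < lam ∧ lam ≤ (m : ℝ) * ν ∧ lam ≤ (m : ℝ) := by
  intro lam hlam
  have hG i := hJ.selMatrix_mul_mul_transpose (hinj i)
  have hle : lam ≤ m := by
    simpa using le_card_of_mem_spectrum_additiveSchwarz_mul hJ
      (fun i => (hG i).det_pos.ne'.isUnit) hlam
  obtain ⟨j⟩ : Nonempty (Fin N) := by
    by_contra h
    rw [not_nonempty_iff] at h
    simp [spectrum.of_subsingleton] at hlam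
  have hν1 : 0 < ν := by
    obtain ⟨i, a, ha⟩ := hcover j
    have hi : i ∈ Finset.univ.filter fun i => ∃ a, ι i a = j :=
      Finset.mem_filter.mpr ⟨Finset.mem_univ i, a, ha⟩
    exact (Finset.card_pos.mpr ⟨i, hi⟩).trans_le (hν j)
  refine ⟨pos_of_mem_spectrum_additiveSchwarz_mul hJ hG
    (fun _ => exists_selMatrix_mulVec_ne_zero hcover) hlam, ?_, hle⟩
  calc lam ≤ m := hle
    _ ≤ m * ν := le_mul_of_one_le_right m.cast_nonneg (Nat.one_le_cast.mpr hν1)
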